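/- Let p be an odd prime, m an odd positive integer, q = p^m, set p* = (−1)^{(p−1)/2}·p and G = Σ_{i∈𝔽_p} ζ_p^{i²} ∈ ℂ (the quadratic Gauss sum, satisfying G² = p*). Let f : 𝔽_q → 𝔽_p be a p-ary function with f(0) = 0, and suppose there exist maps μ : 𝔽_q → {1, −1} and g : 𝔽_q → 𝔽_p such that W_f(β) = μ(β)·(p*)^{(m−1)/2}·G·ζ_p^{g(β)} for all β ∈ 𝔽_q. Set ε = ((−1)^{(p−1)/2})^{(m+1)/2}. Then for every i ∈ 𝔽_p^*: Σ_{β∈D_{g,i}} μ(β) − Σ_{β∈D_{g,0}} μ(β) = ε·p^{(m−1)/2} if i is a square in 𝔽_p^*, and = −ε·p^{(m−1)/2} if i is a nonsquare in 𝔽_p^*. -/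

import Mathlib

open Finset

noncomputable def zeta (p : ℕ) (a : ZMod p) : ℂ :=
  Complex.exp (2 * Real.pi * Complex.I / p) ^ a.val
def Dset {p : ℕ} {F : Type*} [Fintype F] (f : F → ZMod p) (i : ZMod p) : Finset F :=
  Finset.univ.filter fun x => f x = i
noncomputable def walsh (p : ℕ) {F : Type*} [Fintype F] [CommRing F] [Algebra (ZMod p) F]
    (f : F → ZMod p) (β : F) : ℂ :=
  ∑ x : F, zeta p (f x - Algebra.trace (ZMod p) F (β * x))

/-! ### Auxiliary lemmas -/

lemma hzeta_prim (p : ℕ) [Fact p.Prime] :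
    IsPrimitiveRoot (Complex.exp (2 * Real.pi * Complex.I / p)) p :=
  Complex.isPrimitiveRoot_exp p (Nat.Prime.ne_zero Fact.out)

noncomputable def psi (p : ℕ) [Fact p.Prime] : AddChar (ZMod p) ℂ :=
  AddChar.zmodChar p (hzeta_prim p).pow_eq_one

lemma psi_eq (p : ℕ) [Fact p.Prime] (a : ZMod p) : psi p a = zeta p a :=
  AddChar.zmodChar_apply _ _

lemma psi_prim (p : ℕ) [Fact p.Prime] : (psi p).IsPrimitive :=
  AddChar.zmodChar_primitive_of_primitive_root p (hzeta_prim p)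

lemma zeta_add (p : ℕ) [Fact p.Prime] (a b : ZMod p) :
    zeta p (a + b) = zeta p a * zeta p b := by
  rw [← psi_eq, ← psi_eq, ← psi_eq, AddChar.map_add_eq_mul]

lemma zeta_zero (p : ℕ) [Fact p.Prime] : zeta p (0 : ZMod p) = 1 := by
  rw [← psi_eq]; exact AddChar.map_zero_eq_one _

lemma zeta_ne_one (p : ℕ) [Fact p.Prime] {a : ZMod p} (ha : a ≠ 0) : zeta p a ≠ 1 := by
  intro h
  have h2 := ((hzeta_prim p).pow_eq_one_iff_dvd a.val).mp h
  have hv : a.val = 0 := Nat.eq_zero_of_dvd_of_lt h2 a.val_lt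
  exact ha (by rwa [← ZMod.val_eq_zero])

lemma zeta_sum (p : ℕ) [Fact p.Prime] : ∑ a : ZMod p, zeta p a = 0 := by
  have h : (psi p) ≠ 1 := by
    rw [AddChar.ne_one_iff]
    exact ⟨1, by rw [psi_eq]; exact zeta_ne_one p one_ne_zero⟩
  simpa [psi_eq] using AddChar.sum_eq_zero_of_ne_one h

noncomputable def chiC (p : ℕ) [Fact p.Prime] : MulChar (ZMod p) ℂ :=
  (quadraticChar (ZMod p)).ringHomComp (Int.castRingHom ℂ)

lemma two_ne (p : ℕ) [Fact p.Prime] (hp : Odd p) : (2 : ZMod p) ≠ 0 := by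
  have h2 : p ≠ 2 := by rintro rfl; exact (Nat.not_odd_iff_even.mpr even_two) hp
  intro h
  have h2' : ((2:ℕ) : ZMod p) = 0 := by exact_mod_cast h
  rw [ZMod.natCast_eq_zero_iff] at h2'
  exact h2 ((Nat.prime_dvd_prime_iff_eq Fact.out Nat.prime_two).mp h2')

lemma card_fib_zero (p : ℕ) [Fact p.Prime] :
    (univ.filter fun a : ZMod p => a^2 = 0).card = 1 := by
  have : (univ.filter fun a : ZMod p => a^2 = 0) = {0} := by
    ext a; simp [pow_eq_zero_iff]
  rw [this, card_singleton]

lemma card_fib_sq (p : ℕ) [Fact p.Prime] (hp : Odd p) {i : ZMod p} (hi : i ≠ 0)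
    (h : IsSquare i) : (univ.filter fun a : ZMod p => a^2 = i).card = 2 := by
  obtain ⟨b, rfl⟩ := h
  have hb : b ≠ 0 := by rintro rfl; simp at hi
  have : (univ.filter fun a : ZMod p => a^2 = b * b) = {b, -b} := by
    ext a
    simp only [mem_filter, mem_univ, true_and, mem_insert, mem_singleton]
    rw [show b * b = b ^ 2 by ring, (Commute.all a b).sq_eq_sq_iff_eq_or_eq_neg]
  rw [this, card_insert_of_notMem (by
    simp only [mem_singleton]
    intro hbb
    apply two_ne p hp
    have h0 : b + b = 0 := by linear_combination hbb
    have h2b : (2 : ZMod p) * b = 0 := by ring_nf; linear_combination h0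
    rcases mul_eq_zero.mp h2b with h|h
    · exact h
    · exact absurd h hb), card_singleton]

lemma card_fib_ns (p : ℕ) [Fact p.Prime] {i : ZMod p} (h : ¬ IsSquare i) :
    (univ.filter fun a : ZMod p => a^2 = i).card = 0 := by
  rw [card_eq_zero]
  ext a
  simp only [mem_filter, mem_univ, true_and, notMem_empty, iff_false]
  intro ha
  exact h ⟨a, by rw [← ha]; ring⟩

lemma card_fib_eq (p : ℕ) [Fact p.Prime] (hp : Odd p) (i : ZMod p) :
    ((univ.filter fun a : ZMod p => a^2 = i).card : ℂ) = 1 + chiC p i := by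
  have happ : chiC p i = ((quadraticChar (ZMod p) i : ℤ) : ℂ) := rfl
  rcases eq_or_ne i 0 with rfl | hi
  · rw [card_fib_zero, happ, quadraticChar_zero]; norm_num
  · by_cases hsq : IsSquare i
    · rw [card_fib_sq p hp hi hsq, happ, (quadraticChar_one_iff_isSquare hi).mpr hsq]; norm_num
    · rw [card_fib_ns p hsq, happ, quadraticChar_neg_one_iff_not_isSquare.mpr hsq]; norm_num

lemma ringChar_ne_two (p : ℕ) [Fact p.Prime] (hp : Odd p) : ringChar (ZMod p) ≠ 2 := by
  rw [ZMod.ringChar_zmod_n]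
  rintro rfl; exact (Nat.not_odd_iff_even.mpr even_two) hp

lemma chiC_ne_one (p : ℕ) [Fact p.Prime] (hp : Odd p) : chiC p ≠ 1 :=
  (MulChar.ringHomComp_ne_one_iff Int.cast_injective).mpr
    (quadraticChar_ne_one (ringChar_ne_two p hp))

lemma chiC_neg_one (p : ℕ) [Fact p.Prime] (hp : Odd p) :
    chiC p (-1) = ((-1 : ℤ) ^ ((p - 1) / 2) : ℤ) := by
  have h1 : quadraticChar (ZMod p) (-1) = ZMod.χ₄ (Fintype.card (ZMod p)) :=
    quadraticChar_neg_one (ringChar_ne_two p hp)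
  rw [ZMod.card] at h1
  have h2 : ZMod.χ₄ (p : ZMod 4) = (-1 : ℤ) ^ (p / 2) :=
    ZMod.χ₄_eq_neg_one_pow (Nat.odd_iff.mp hp)
  have hodd := Nat.odd_iff.mp hp
  have h3 : p / 2 = (p - 1) / 2 := by omega
  show ((quadraticChar (ZMod p) (-1) : ℤ) : ℂ) = _
  rw [h1, h2, h3]

lemma G_eq_gaussSum (p : ℕ) [Fact p.Prime] (hp : Odd p) :
    (∑ a : ZMod p, zeta p (a^2)) = gaussSum (chiC p) (psi p) := by
  have h1 : (∑ a : ZMod p, zeta p (a^2)) = ∑ a : ZMod p, psi p (a^2) := by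
    simp [psi_eq]
  rw [h1, Finset.sum_comp (fun b => psi p b) (fun a : ZMod p => a ^ 2)]
  rw [Finset.sum_subset (Finset.subset_univ (univ.image fun a : ZMod p => a ^ 2))
    (by intro x _ hx
        have : (univ.filter fun a : ZMod p => a^2 = x).card = 0 := by
          rw [Finset.card_eq_zero, Finset.filter_eq_empty_iff]
          intro a _
          exact fun h => hx (Finset.mem_image.mpr ⟨a, Finset.mem_univ a, h⟩)
        simp [this])]
  have key : ∀ i : ZMod p,
      ((univ.filter fun a : ZMod p => a^2 = i).card : ℂ) • psi p i
        = psi p i + chiC p i * psi p i := by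
    intro i
    rw [smul_eq_mul, card_fib_eq p hp i]; ring
  calc ∑ i : ZMod p, (univ.filter fun a : ZMod p => a^2 = i).card • psi p i
      = ∑ i : ZMod p, (psi p i + chiC p i * psi p i) := by
        refine Finset.sum_congr rfl fun i _ => ?_
        rw [← key i, nsmul_eq_mul, smul_eq_mul]
    _ = (∑ i : ZMod p, psi p i) + gaussSum (chiC p) (psi p) := by
        rw [Finset.sum_add_distrib]; rfl
    _ = gaussSum (chiC p) (psi p) := by
        rw [show (∑ i : ZMod p, psi p i) = 0 by
          simpa [psi_eq] using zeta_sum p, zero_add]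

lemma G_sq (p : ℕ) [Fact p.Prime] (hp : Odd p) :
    (∑ a : ZMod p, zeta p (a^2)) ^ 2 = (((-1 : ℤ) ^ ((p - 1) / 2) * (p : ℤ) : ℤ) : ℂ) := by
  rw [G_eq_gaussSum p hp,
    gaussSum_sq (chiC_ne_one p hp) ((quadraticChar_isQuadratic (ZMod p)).comp _) (psi_prim p),
    chiC_neg_one p hp, ZMod.card]
  push_cast; ring

lemma sum_walsh (p m : ℕ) [Fact p.Prime] (F : Type*) [Field F] [Fintype F]
    [Algebra (ZMod p) F] (hcard : Fintype.card F = p ^ m)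
    (f : F → ZMod p) (hf0 : f 0 = 0) :
    ∑ β : F, walsh p f β = (p : ℂ) ^ m := by
  unfold walsh
  rw [Finset.sum_comm]
  rw [Finset.sum_eq_single (0 : F)]
  · simp only [mul_zero, map_zero, hf0, sub_zero, zeta_zero, Finset.sum_const, card_univ,
      hcard, nsmul_eq_mul, mul_one]
    push_cast; ring
  · intro x _ hx
    have key : ∑ β : F, zeta p (-(Algebra.trace (ZMod p) F (β * x))) = 0 := by
      set L : F →+ ZMod p :=
        -((Algebra.trace (ZMod p) F).toAddMonoidHom.comp (AddMonoidHom.mulRight x)) with hL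
      have hLa : ∀ β : F, L β = -(Algebra.trace (ZMod p) F (β * x)) := fun β => rfl
      have hne : (psi p).compAddMonoidHom L ≠ 1 := by
        rw [AddChar.ne_one_iff]
        have htr := (_root_.traceForm_nondegenerate (ZMod p) F).1 x
        simp_rw [Algebra.traceForm_apply] at htr
        have hex : ∃ b : F, Algebra.trace (ZMod p) F (x * b) ≠ 0 := by
          by_contra hf
          push_neg at hf
          exact hx (htr hf)
        obtain ⟨b, hb⟩ := hex
        refine ⟨b, ?_⟩
        rw [AddChar.compAddMonoidHom_apply, hLa, psi_eq]
        apply zeta_ne_one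
        rw [mul_comm] at hb
        exact neg_ne_zero.mpr hb
      have := AddChar.sum_eq_zero_of_ne_one hne
      simpa only [AddChar.compAddMonoidHom_apply, hLa, psi_eq] using this
    calc ∑ β : F, zeta p (f x - Algebra.trace (ZMod p) F (β * x))
        = ∑ β : F, zeta p (f x) * zeta p (-(Algebra.trace (ZMod p) F (β * x))) := by
          refine Finset.sum_congr rfl fun β _ => ?_
          rw [← zeta_add, sub_eq_add_neg]
      _ = zeta p (f x) * ∑ β : F, zeta p (-(Algebra.trace (ZMod p) F (β * x))) := by
          rw [Finset.mul_sum]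
      _ = 0 := by rw [key, mul_zero]
  · intro h; exact absurd (Finset.mem_univ 0) h

open Polynomial in
lemma coeff_geom (p j : ℕ) (hj : j < p) : (∑ i ∈ range p, (X : ℚ[X]) ^ i).coeff j = 1 := by
  rw [finset_sum_coeff]
  simp only [coeff_X_pow]
  rw [Finset.sum_ite_eq (range p) j (fun _ => (1:ℚ))]
  simp [hj]

open Polynomial in
lemma const_of_sum_zeta_zero (p : ℕ) [Fact p.Prime] (d : ℕ → ℤ)
    (h : ∑ j ∈ range p, (d j : ℂ) * Complex.exp (2 * Real.pi * Complex.I / p) ^ j = 0) :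
    ∀ j < p, d j = d 0 := by
  have hp : p.Prime := Fact.out
  set ζ : ℂ := Complex.exp (2 * Real.pi * Complex.I / p) with hζdef
  have hζ : IsPrimitiveRoot ζ p := Complex.isPrimitiveRoot_exp p hp.ne_zero
  set P : ℚ[X] := ∑ j ∈ range p, C ((d j : ℚ)) * X ^ j with hP
  have hcoeff : ∀ j < p, P.coeff j = (d j : ℚ) := by
    intro j hj
    rw [hP, finset_sum_coeff]
    simp only [coeff_C_mul, coeff_X_pow, mul_ite, mul_one, mul_zero]
    rw [Finset.sum_ite_eq (range p) j]
    simp [hj]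
  have haeval : aeval ζ P = 0 := by
    rw [hP, map_sum]
    simp only [map_mul, map_pow, aeval_C, aeval_X]
    rw [← h]
    refine Finset.sum_congr rfl fun j _ => ?_
    norm_num
  have hdvd : cyclotomic p ℚ ∣ P := by
    rw [cyclotomic_eq_minpoly_rat hζ hp.pos]
    exact minpoly.dvd ℚ ζ haeval
  obtain ⟨Q, hQ⟩ := hdvd
  have hdegP : P.natDegree ≤ p - 1 := by
    refine natDegree_sum_le_of_forall_le _ _ fun j hj => ?_
    refine le_trans (natDegree_C_mul_le _ _) ?_
    rw [natDegree_X_pow]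
    exact Nat.le_sub_one_of_lt (mem_range.mp hj)
  have hcyc_deg : (cyclotomic p ℚ).natDegree = p - 1 := by
    rw [natDegree_cyclotomic, Nat.totient_prime hp]
  have hQC : Q = C (Q.coeff 0) := by
    rcases eq_or_ne Q 0 with rfl | hQ0
    · simp
    · have h1 : P.natDegree = (cyclotomic p ℚ).natDegree + Q.natDegree := by
        rw [hQ, natDegree_mul (cyclotomic_ne_zero p ℚ) hQ0]
      have h2 : Q.natDegree = 0 := by
        have := hp.one_lt
        omega
      exact (eq_C_of_natDegree_eq_zero h2)
  have hval : ∀ j < p, (d j : ℚ) = Q.coeff 0 := by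
    intro j hj
    have hc := hcoeff j hj
    rw [hQ, hQC] at hc
    rw [mul_comm, coeff_C_mul, cyclotomic_prime ℚ p, coeff_geom p j hj, mul_one] at hc
    exact hc.symm
  intro j hj
  have h1 := hval j hj
  have h2 := hval 0 hp.pos
  exact_mod_cast h1.trans h2.symm

lemma sum_zmod_eq_sum_range (p : ℕ) [Fact p.Prime] (F : ZMod p → ℂ) :
    ∑ i : ZMod p, F i = ∑ j ∈ range p, F (j : ZMod p) := by
  refine Finset.sum_nbij' (fun i => i.val) (fun j => (j : ZMod p)) ?_ ?_ ?_ ?_ ?_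
  · intro i _; exact mem_range.mpr i.val_lt
  · intro j _; exact mem_univ _
  · intro i _; exact ZMod.natCast_zmod_val i
  · intro j hj; exact ZMod.val_cast_of_lt (mem_range.mp hj)
  · intro i _; rw [ZMod.natCast_zmod_val]

lemma G_expand (p : ℕ) [Fact p.Prime] :
    (∑ a : ZMod p, zeta p (a ^ 2))
      = ∑ i : ZMod p, ((univ.filter fun a : ZMod p => a^2 = i).card : ℂ) * zeta p i := by
  rw [← Finset.sum_fiberwise univ (fun a : ZMod p => a ^ 2) (fun a => zeta p (a ^ 2))]
  refine Finset.sum_congr rfl fun i _ => ?_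
  rw [Finset.sum_congr rfl (fun a ha => by rw [(mem_filter.mp ha).2] :
    ∀ a ∈ univ.filter (fun a : ZMod p => a ^ 2 = i), zeta p (a ^ 2) = zeta p i)]
  rw [Finset.sum_const, nsmul_eq_mul]


/-- Lemma 4.2(iii), `m` odd. Let `p` be an odd prime, `m` odd positive,
`p* = (−1)^{(p−1)/2}·p`, `G = Σ_{i ∈ 𝔽_p} ζ_p^{i²}` the quadratic Gauss sum, and
`f : 𝔽_q → 𝔽_p` with `f(0) = 0` such that
`W_f(β) = μ(β)·(p*)^{(m−1)/2}·G·ζ_p^{g(β)}` for maps `μ : 𝔽_q → {1,−1}`, `g : 𝔽_q → 𝔽_p`.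
With `ε = ((−1)^{(p−1)/2})^{(m+1)/2}`, for every `i ∈ 𝔽_p^*`:
`Σ_{β ∈ D_{g,i}} μ(β) − Σ_{β ∈ D_{g,0}} μ(β)` equals `ε·p^{(m−1)/2}` if `i` is a square
in `𝔽_p^*`, and `−ε·p^{(m−1)/2}` if `i` is a nonsquare. -/
theorem stmt_6 (p m : ℕ) [Fact p.Prime] (hp : Odd p) (hm : 0 < m) (hmo : Odd m)
    (F : Type*) [Field F] [Fintype F] [Algebra (ZMod p) F]
    (hcard : Fintype.card F = p ^ m)
    (f : F → ZMod p) (hf0 : f 0 = 0)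
    (μ : F → ℂ) (hμ : ∀ β : F, μ β = 1 ∨ μ β = -1)
    (g : F → ZMod p)
    (hW : ∀ β : F, walsh p f β
        = μ β * (((-1 : ℤ) ^ ((p - 1) / 2) * (p : ℤ) : ℤ) : ℂ) ^ ((m - 1) / 2)
            * (∑ a : ZMod p, zeta p (a ^ 2)) * zeta p (g β)) :
    ∀ i : ZMod p, i ≠ 0 →
      (IsSquare i →
        (∑ β ∈ Dset g i, μ β) - (∑ β ∈ Dset g 0, μ β)
          = ((((-1 : ℤ) ^ ((p - 1) / 2)) ^ ((m + 1) / 2) : ℤ) : ℂ)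
              * (p : ℂ) ^ ((m - 1) / 2)) ∧
      (¬ IsSquare i →
        (∑ β ∈ Dset g i, μ β) - (∑ β ∈ Dset g 0, μ β)
          = -(((((-1 : ℤ) ^ ((p - 1) / 2)) ^ ((m + 1) / 2) : ℤ) : ℂ)
              * (p : ℂ) ^ ((m - 1) / 2))) := by
  classical
  have hp' : p.Prime := Fact.out
  have hpm : m % 2 = 1 := Nat.odd_iff.mp hmo
  have hm1 : (m + 1) / 2 = (m - 1) / 2 + 1 := by omega
  have hmt : m = 2 * ((m - 1) / 2) + 1 := by omega
  set t := (m - 1) / 2 with ht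
  set s : ℤ := (-1 : ℤ) ^ ((p - 1) / 2) with hs_def
  have hs2 : s * s = 1 := by
    rw [hs_def, ← pow_add, ← two_mul, pow_mul]; norm_num
  set pstar : ℤ := s * p with hpstar_def
  have hpstar_ne : pstar ≠ 0 := by
    refine mul_ne_zero ?_ ?_
    · intro h; rw [h, zero_mul] at hs2; exact zero_ne_one hs2
    · exact_mod_cast hp'.ne_zero
  set c : ℤ := s ^ (t + 1) * (p : ℤ) ^ t with hc_def
  set G : ℂ := ∑ a : ZMod p, zeta p (a ^ 2) with hG_def
  set A : ℂ := ((pstar : ℤ) : ℂ) ^ t with hA_def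
  have hGsq : G ^ 2 = ((pstar : ℤ) : ℂ) := G_sq p hp
  have hGne : G ≠ 0 := by
    intro h
    rw [h] at hGsq
    have : ((pstar : ℤ) : ℂ) = 0 := by rw [← hGsq]; ring
    exact hpstar_ne (by exact_mod_cast this)
  have hAne : A ≠ 0 := pow_ne_zero _ (by exact_mod_cast hpstar_ne)
  set S : ℂ := ∑ β : F, μ β * zeta p (g β) with hS_def
  have hkey : A * G * S = (p : ℂ) ^ m := by
    rw [← sum_walsh p m F hcard f hf0]
    rw [hS_def, Finset.mul_sum]
    refine (Finset.sum_congr rfl fun β _ => ?_).symm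
    rw [hW β]; ring
  have hczpstar : c * pstar ^ (t + 1) = (p : ℤ) ^ m := by
    have hh : c * pstar ^ (t + 1) = (s * s) ^ (t + 1) * (p : ℤ) ^ (2 * t + 1) := by
      rw [hc_def, hpstar_def, mul_pow]; ring
    rw [hh, hs2, one_pow, one_mul, ← hmt]
  have hS_eq : S = (c : ℂ) * G := by
    apply mul_left_cancel₀ (mul_ne_zero hAne hGne)
    rw [hkey]
    calc ((p : ℂ)) ^ m = ((((p : ℤ)) ^ m : ℤ) : ℂ) := by push_cast; ring
      _ = ((c * pstar ^ (t + 1) : ℤ) : ℂ) := by rw [hczpstar]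
      _ = (c : ℂ) * ((pstar : ℤ) : ℂ) ^ t * ((pstar : ℤ) : ℂ) := by push_cast; ring
      _ = (c : ℂ) * A * G ^ 2 := by rw [hGsq, hA_def]
      _ = A * G * ((c : ℂ) * G) := by ring
  -- integer-valued fiber sums
  set n : ZMod p → ℤ := fun i => ∑ β ∈ Dset g i, (if μ β = 1 then 1 else -1) with hn_def
  have hn : ∀ i : ZMod p, ((n i : ℤ) : ℂ) = ∑ β ∈ Dset g i, μ β := by
    intro i
    rw [hn_def]
    push_cast
    refine Finset.sum_congr rfl fun β _ => ?_
    rcases hμ β with h | h <;> rw [h] <;> norm_num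
  set k : ZMod p → ℕ := fun i => (univ.filter fun a : ZMod p => a ^ 2 = i).card with hk_def
  have hSn : S = ∑ i : ZMod p, (n i : ℂ) * zeta p i := by
    rw [hS_def, ← Finset.sum_fiberwise univ g (fun β => μ β * zeta p (g β))]
    refine Finset.sum_congr rfl fun i _ => ?_
    rw [hn i]
    rw [Finset.sum_mul]
    refine Finset.sum_congr rfl fun β hβ => ?_
    rw [(mem_filter.mp hβ).2]
  have hGk : G = ∑ i : ZMod p, (k i : ℂ) * zeta p i := G_expand p
  have hzero : ∑ i : ZMod p, ((n i - c * (k i : ℤ) : ℤ) : ℂ) * zeta p i = 0 := by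
    have expand : ∀ i : ZMod p, ((n i - c * (k i : ℤ) : ℤ) : ℂ) * zeta p i
        = (n i : ℂ) * zeta p i - (c : ℂ) * ((k i : ℂ) * zeta p i) := by
      intro i; push_cast; ring
    rw [Finset.sum_congr rfl fun i _ => expand i, Finset.sum_sub_distrib, ← Finset.mul_sum,
      ← hSn, ← hGk, hS_eq]
    ring
  set d : ℕ → ℤ := fun j => n ((j : ZMod p)) - c * (k ((j : ZMod p)) : ℤ) with hd_def
  have hrange : ∑ j ∈ range p, (d j : ℂ) * Complex.exp (2 * Real.pi * Complex.I / p) ^ j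
      = 0 := by
    have hre := sum_zmod_eq_sum_range p
      (fun i => ((n i - c * (k i : ℤ) : ℤ) : ℂ) * zeta p i)
    rw [hre] at hzero
    rw [← hzero]
    refine Finset.sum_congr rfl fun j hj => ?_
    have : zeta p ((j : ZMod p)) = Complex.exp (2 * Real.pi * Complex.I / p) ^ j := by
      show Complex.exp (2 * Real.pi * Complex.I / p) ^ ((j : ZMod p)).val = _
      rw [ZMod.val_cast_of_lt (mem_range.mp hj)]
    rw [this, hd_def]
  have hconst := const_of_sum_zeta_zero p d hrange
  -- conclusion
  intro i hi
  have hdi : d i.val = n i - c * (k i : ℤ) := by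
    rw [hd_def]
    simp only [ZMod.natCast_zmod_val]
  have hd0 : d 0 = n 0 - c := by
    rw [hd_def]
    simp only [Nat.cast_zero]
    have : k (0 : ZMod p) = 1 := card_fib_zero p
    rw [this]; push_cast; ring
  have heq : n i - c * (k i : ℤ) = n 0 - c := by
    rw [← hdi, ← hd0]
    exact hconst i.val i.val_lt
  have hgoal : ∀ z : ℤ, n i - n 0 = z →
      (∑ β ∈ Dset g i, μ β) - (∑ β ∈ Dset g 0, μ β) = (z : ℂ) := by
    intro z hz
    rw [← hn i, ← hn 0, ← Int.cast_sub, hz]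
  have htarget : ((((-1 : ℤ) ^ ((p - 1) / 2)) ^ ((m + 1) / 2) : ℤ) : ℂ)
      * (p : ℂ) ^ ((m - 1) / 2) = (c : ℂ) := by
    rw [hc_def, hm1, hs_def]
    push_cast; ring
  constructor
  · intro hsq
    have hki : k i = 2 := card_fib_sq p hp hi hsq
    have : n i - n 0 = c := by rw [hki] at heq; push_cast at heq ⊢; linarith
    rw [htarget]
    exact hgoal c this
  · intro hsq
    have hki : k i = 0 := card_fib_ns p hsq
    have : n i - n 0 = -c := by rw [hki] at heq; push_cast at heq ⊢; linarith
    rw [htarget, ← Int.cast_neg]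
    exact hgoal (-c) this
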